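/- arXiv:2203.12401 — 10 statements merged into one kernel-verified Lean document; each statement's English description precedes it below -/
import Mathlib

section
/- Let f(X) = a₀X⁴ + 4a₁X³ + 6a₂X² + 4a₃X + a₄ be a real quartic polynomial and let σ ∈ {1, -1}. Suppose x, y : ℝ → ℝ are differentiable on an open interval I, that f(x(t)) > 0, f(y(t)) > 0 and x(t) ≠ y(t) for all t ∈ I, and that x'(t) = √(f(x(t))) and y'(t) = σ·√(f(y(t))) on I. Then the function t ↦ ((√(f(x(t))) + σ·√(f(y(t))))/(x(t) − y(t)))² − a₀(x(t) + y(t))² − 4a₁(x(t) + y(t)) is constant on I. -/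
/-!
Along the flow, `√f(x) + σ√f(y)` has derivative `(f'(x) + f'(y))/2` and `x − y` has derivative
`√f(x) − σ√f(y)`, whose product with the numerator is `f(x) − f(y)`. Hence the derivative of
`Q = (√f(x) + σ√f(y))/(x − y)` is `((f'(x) + f'(y))/2 · (x − y) − (f(x) − f(y)))/(x − y)²`.
For a quartic the trapezoid rule is off by exactly `(x − y)³ (a₀(x + y) + 2a₁)`, so
`(Q²)' = 2(√f(x) + σ√f(y))(a₀(x + y) + 2a₁)`, which is the derivative of
`a₀(x + y)² + 4a₁(x + y)` since `(x + y)' = √f(x) + σ√f(y)`.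
-/

open Real

section Quartic

variable (a₀ a₁ a₂ a₃ a₄ : ℝ)

def quartic (X : ℝ) : ℝ := a₀ * X ^ 4 + 4 * a₁ * X ^ 3 + 6 * a₂ * X ^ 2 + 4 * a₃ * X + a₄

def quarticDeriv (X : ℝ) : ℝ := 4 * a₀ * X ^ 3 + 12 * a₁ * X ^ 2 + 12 * a₂ * X + 4 * a₃

theorem hasDerivAt_quartic (w : ℝ) :
    HasDerivAt (quartic a₀ a₁ a₂ a₃ a₄) (quarticDeriv a₀ a₁ a₂ a₃ w) w := by
  have h := (((((hasDerivAt_pow 4 w).const_mul a₀).add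
    ((hasDerivAt_pow 3 w).const_mul (4 * a₁))).add
    ((hasDerivAt_pow 2 w).const_mul (6 * a₂))).add
    ((hasDerivAt_id' w).const_mul (4 * a₃))).add_const a₄
  refine h.congr_deriv ?_
  simp only [quarticDeriv]
  ring

theorem quartic_trapezoid_error (u v : ℝ) :
    (quarticDeriv a₀ a₁ a₂ a₃ u + quarticDeriv a₀ a₁ a₂ a₃ v) / 2 * (u - v)
        - (quartic a₀ a₁ a₂ a₃ a₄ u - quartic a₀ a₁ a₂ a₃ a₄ v)
      = (u - v) ^ 3 * (a₀ * (u + v) + 2 * a₁) := by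
  simp only [quartic, quarticDeriv]
  ring

end Quartic

section EulerFlow

variable {f x y : ℝ → ℝ} {σ t : ℝ}

theorem hasDerivAt_sqrt_comp_of_hasDerivAt_mul_sqrt {f' c : ℝ}
    (hf : HasDerivAt f f' (x t)) (hx : HasDerivAt x (c * √(f (x t))) t) (hpos : 0 < f (x t)) :
    HasDerivAt (fun s => √(f (x s))) (c * f' / 2) t := by
  refine ((hasDerivAt_sqrt hpos.ne').comp t (hf.comp t hx)).congr_deriv ?_
  have : √(f (x t)) ≠ 0 := (sqrt_pos.mpr hpos).ne'
  field_simp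

theorem hasDerivAt_euler_quotient {fx' fy' : ℝ} (hσ : σ ^ 2 = 1)
    (hfx' : HasDerivAt f fx' (x t)) (hfy' : HasDerivAt f fy' (y t))
    (hx : HasDerivAt x (√(f (x t))) t) (hy : HasDerivAt y (σ * √(f (y t))) t)
    (hfx : 0 < f (x t)) (hfy : 0 < f (y t)) (hxy : x t ≠ y t) :
    HasDerivAt (fun s => (√(f (x s)) + σ * √(f (y s))) / (x s - y s))
      (((fx' + fy') / 2 * (x t - y t) - (f (x t) - f (y t))) / (x t - y t) ^ 2) t := by
  have hnum : HasDerivAt (fun s => √(f (x s)) + σ * √(f (y s))) ((fx' + fy') / 2) t := by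
    have hsx := hasDerivAt_sqrt_comp_of_hasDerivAt_mul_sqrt hfx'
      (hx.congr_deriv (one_mul _).symm) hfx
    have hsy := hasDerivAt_sqrt_comp_of_hasDerivAt_mul_sqrt hfy' hy hfy
    refine (hsx.add (hsy.const_mul σ)).congr_deriv ?_
    linear_combination (fy' / 2) * hσ
  have hden : HasDerivAt (fun s => x s - y s) (√(f (x t)) - σ * √(f (y t))) t := hx.sub hy
  have hprod : (√(f (x t)) + σ * √(f (y t))) * (√(f (x t)) - σ * √(f (y t)))
      = f (x t) - f (y t) := by
    linear_combination sq_sqrt hfx.le - σ ^ 2 * sq_sqrt hfy.le - f (y t) * hσ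
  refine (hnum.div hden (sub_ne_zero_of_ne hxy)).congr_deriv ?_
  rw [hprod]

theorem hasDerivAt_euler_integral {a₀ a₁ a₂ a₃ a₄ : ℝ} (hσ : σ ^ 2 = 1)
    (hx : HasDerivAt x (√(quartic a₀ a₁ a₂ a₃ a₄ (x t))) t)
    (hy : HasDerivAt y (σ * √(quartic a₀ a₁ a₂ a₃ a₄ (y t))) t)
    (hfx : 0 < quartic a₀ a₁ a₂ a₃ a₄ (x t)) (hfy : 0 < quartic a₀ a₁ a₂ a₃ a₄ (y t))
    (hxy : x t ≠ y t) :
    HasDerivAt (fun s => ((√(quartic a₀ a₁ a₂ a₃ a₄ (x s))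
        + σ * √(quartic a₀ a₁ a₂ a₃ a₄ (y s))) / (x s - y s)) ^ 2
          - a₀ * (x s + y s) ^ 2 - 4 * a₁ * (x s + y s)) 0 t := by
  have hquot := hasDerivAt_euler_quotient hσ (hasDerivAt_quartic _ _ _ _ _ _)
    (hasDerivAt_quartic _ _ _ _ _ _) hx hy hfx hfy hxy
  rw [quartic_trapezoid_error] at hquot
  have hsum : HasDerivAt (fun s => x s + y s) _ t := hx.add hy
  refine (((hquot.pow 2).sub ((hsum.pow 2).const_mul a₀)).sub
    (hsum.const_mul (4 * a₁))).congr_deriv ?_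
  have : x t - y t ≠ 0 := sub_ne_zero_of_ne hxy
  simp only [Nat.cast_ofNat, Nat.add_one_sub_one, pow_one]
  field_simp
  ring

end EulerFlow

/-- **Euler's lemma** (Lemma A.1): if `x' = √(f(x))` and `y' = σ·√(f(y))` on an open
interval, with `f(x) > 0`, `f(y) > 0` and `x ≠ y` there, then
`((√(f(x)) + σ√(f(y)))/(x − y))² − a₀(x+y)² − 4a₁(x+y)` is constant on that interval. -/
theorem euler_lemma_integral_constant
    (a₀ a₁ a₂ a₃ a₄ : ℝ) (σ : ℝ) (hσ : σ = 1 ∨ σ = -1)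
    (f : ℝ → ℝ)
    (hf : f = fun X => a₀ * X ^ 4 + 4 * a₁ * X ^ 3 + 6 * a₂ * X ^ 2 + 4 * a₃ * X + a₄)
    (A B : ℝ) (x y : ℝ → ℝ)
    (hx : ∀ t ∈ Set.Ioo A B, HasDerivAt x (Real.sqrt (f (x t))) t)
    (hy : ∀ t ∈ Set.Ioo A B, HasDerivAt y (σ * Real.sqrt (f (y t))) t)
    (hfx : ∀ t ∈ Set.Ioo A B, 0 < f (x t))
    (hfy : ∀ t ∈ Set.Ioo A B, 0 < f (y t))
    (hxy : ∀ t ∈ Set.Ioo A B, x t ≠ y t) :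
    ∀ t₁ ∈ Set.Ioo A B, ∀ t₂ ∈ Set.Ioo A B,
      ((Real.sqrt (f (x t₁)) + σ * Real.sqrt (f (y t₁))) / (x t₁ - y t₁)) ^ 2
          - a₀ * (x t₁ + y t₁) ^ 2 - 4 * a₁ * (x t₁ + y t₁)
        = ((Real.sqrt (f (x t₂)) + σ * Real.sqrt (f (y t₂))) / (x t₂ - y t₂)) ^ 2
          - a₀ * (x t₂ + y t₂) ^ 2 - 4 * a₁ * (x t₂ + y t₂) := by
  have hσ2 : σ ^ 2 = 1 := by rcases hσ with rfl | rfl <;> norm_num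
  obtain rfl : f = quartic a₀ a₁ a₂ a₃ a₄ := hf
  have hE := fun t ht => hasDerivAt_euler_integral hσ2 (hx t ht) (hy t ht) (hfx t ht)
    (hfy t ht) (hxy t ht)
  intro t₁ h₁ t₂ h₂
  exact isOpen_Ioo.is_const_of_deriv_eq_zero isPreconnected_Ioo
    (fun t ht => (hE t ht).differentiableAt.differentiableWithinAt)
    (fun t ht => (hE t ht).deriv) h₁ h₂
end

section
/- Let f(X) = a₀X⁴ + 4a₁X³ + 6a₂X² + 4a₃X + a₄ be a real quartic polynomial with Weierstrass invariants g₂ = a₀a₄ − 4a₁a₃ + 3a₂² and g₃ = a₀a₂a₄ + 2a₁a₂a₃ − a₂³ − a₀a₃² − a₁²a₄. Let x, y be real numbers with x ≠ y, f(x) ≥ 0 and f(y) ≥ 0. Define w = (1/4)·((√(f(x)) + √(f(y)))/(x−y))² − (1/4)a₀(x+y)² − a₁(x+y) − a₂ and A = (f(x)/(x−y)³ − f'(x)/(4(x−y)²))·√(f(y)) + (f(y)/(x−y)³ + f'(y)/(4(x−y)²))·√(f(x)). Then A² = 4w³ − g₂w − g₃. -/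
set_option maxHeartbeats 40000000 in
/-- Key algebraic identity of the Biermann–Weierstrass theorem: the quantity `w` built
from Euler's integral satisfies the Weierstrass cubic relation `A² = 4w³ − g₂w − g₃`. -/
theorem biermann_weierstrass_cubic_relation
    (a₀ a₁ a₂ a₃ a₄ : ℝ)
    (f f' : ℝ → ℝ)
    (hf : f = fun X => a₀ * X ^ 4 + 4 * a₁ * X ^ 3 + 6 * a₂ * X ^ 2 + 4 * a₃ * X + a₄)
    (hf' : f' = fun X => 4 * a₀ * X ^ 3 + 12 * a₁ * X ^ 2 + 12 * a₂ * X + 4 * a₃)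
    (g₂ g₃ : ℝ)
    (hg₂ : g₂ = a₀ * a₄ - 4 * a₁ * a₃ + 3 * a₂ ^ 2)
    (hg₃ : g₃ = a₀ * a₂ * a₄ + 2 * a₁ * a₂ * a₃ - a₂ ^ 3 - a₀ * a₃ ^ 2 - a₁ ^ 2 * a₄)
    (x y : ℝ) (hxy : x ≠ y) (hfx : 0 ≤ f x) (hfy : 0 ≤ f y)
    (w A : ℝ)
    (hw : w = (1 / 4) * ((Real.sqrt (f x) + Real.sqrt (f y)) / (x - y)) ^ 2
        - (1 / 4) * a₀ * (x + y) ^ 2 - a₁ * (x + y) - a₂)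
    (hA : A = (f x / (x - y) ^ 3 - f' x / (4 * (x - y) ^ 2)) * Real.sqrt (f y)
        + (f y / (x - y) ^ 3 + f' y / (4 * (x - y) ^ 2)) * Real.sqrt (f x)) :
    A ^ 2 = 4 * w ^ 3 - g₂ * w - g₃ := by
  have hs : x - y ≠ 0 := sub_ne_zero.mpr hxy
  set u := Real.sqrt (f x) with hudef
  set v := Real.sqrt (f y) with hvdef
  have hu : u ^ 2 = a₀ * x ^ 4 + 4 * a₁ * x ^ 3 + 6 * a₂ * x ^ 2 + 4 * a₃ * x + a₄ := by
    rw [hudef, Real.sq_sqrt hfx, hf]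
  have hv : v ^ 2 = a₀ * y ^ 4 + 4 * a₁ * y ^ 3 + 6 * a₂ * y ^ 2 + 4 * a₃ * y + a₄ := by
    rw [hvdef, Real.sq_sqrt hfy, hf]
  have e1 : A * (x - y) ^ 3 = (1 : ℝ)*v*a₄ + (1 : ℝ)*v*y*a₃ + (3 : ℝ)*v*x*a₃ + (3 : ℝ)*v*x*y*a₂ + (3 : ℝ)*v*x^2*a₂ + (3 : ℝ)*v*x^2*y*a₁ + (1 : ℝ)*v*x^3*a₁ + (1 : ℝ)*v*x^3*y*a₀ + (1 : ℝ)*u*a₄ + (3 : ℝ)*u*y*a₃ + (3 : ℝ)*u*y^2*a₂ + (1 : ℝ)*u*y^3*a₁ + (1 : ℝ)*u*x*a₃ + (3 : ℝ)*u*x*y*a₂ + (3 : ℝ)*u*x*y^2*a₁ + (1 : ℝ)*u*x*y^3*a₀ := by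
    rw [hA, hf, hf']
    simp only
    field_simp
    ring
  have e2 : w * (x - y) ^ 2 = (-1 : ℝ)*y^2*a₂ + (-1 : ℝ)*y^3*a₁ + ((-1 : ℝ)/4)*y^4*a₀ + (2 : ℝ)*x*y*a₂ + (1 : ℝ)*x*y^2*a₁ + (-1 : ℝ)*x^2*a₂ + (1 : ℝ)*x^2*y*a₁ + ((1 : ℝ)/2)*x^2*y^2*a₀ + (-1 : ℝ)*x^3*a₁ + ((-1 : ℝ)/4)*x^4*a₀ + ((1 : ℝ)/4)*v^2 + ((1 : ℝ)/2)*u*v + ((1 : ℝ)/4)*u^2 := by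
    rw [hw]
    field_simp
    ring
  have main : A ^ 2 * (x - y) ^ 6 = (4 * w ^ 3 - g₂ * w - g₃) * (x - y) ^ 6 := by
    have key : ((1 : ℝ)*v*a₄ + (1 : ℝ)*v*y*a₃ + (3 : ℝ)*v*x*a₃ + (3 : ℝ)*v*x*y*a₂ + (3 : ℝ)*v*x^2*a₂ + (3 : ℝ)*v*x^2*y*a₁ + (1 : ℝ)*v*x^3*a₁ + (1 : ℝ)*v*x^3*y*a₀ + (1 : ℝ)*u*a₄ + (3 : ℝ)*u*y*a₃ + (3 : ℝ)*u*y^2*a₂ + (1 : ℝ)*u*y^3*a₁ + (1 : ℝ)*u*x*a₃ + (3 : ℝ)*u*x*y*a₂ + (3 : ℝ)*u*x*y^2*a₁ + (1 : ℝ)*u*x*y^3*a₀) ^ 2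
        = 4 * ((-1 : ℝ)*y^2*a₂ + (-1 : ℝ)*y^3*a₁ + ((-1 : ℝ)/4)*y^4*a₀ + (2 : ℝ)*x*y*a₂ + (1 : ℝ)*x*y^2*a₁ + (-1 : ℝ)*x^2*a₂ + (1 : ℝ)*x^2*y*a₁ + ((1 : ℝ)/2)*x^2*y^2*a₀ + (-1 : ℝ)*x^3*a₁ + ((-1 : ℝ)/4)*x^4*a₀ + ((1 : ℝ)/4)*v^2 + ((1 : ℝ)/2)*u*v + ((1 : ℝ)/4)*u^2) ^ 3
          - (a₀ * a₄ - 4 * a₁ * a₃ + 3 * a₂ ^ 2) * ((-1 : ℝ)*y^2*a₂ + (-1 : ℝ)*y^3*a₁ + ((-1 : ℝ)/4)*y^4*a₀ + (2 : ℝ)*x*y*a₂ + (1 : ℝ)*x*y^2*a₁ + (-1 : ℝ)*x^2*a₂ + (1 : ℝ)*x^2*y*a₁ + ((1 : ℝ)/2)*x^2*y^2*a₀ + (-1 : ℝ)*x^3*a₁ + ((-1 : ℝ)/4)*x^4*a₀ + ((1 : ℝ)/4)*v^2 + ((1 : ℝ)/2)*u*v + ((1 : ℝ)/4)*u^2) *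 (x - y) ^ 4
          - (a₀ * a₂ * a₄ + 2 * a₁ * a₂ * a₃ - a₂ ^ 3 - a₀ * a₃ ^ 2 - a₁ ^ 2 * a₄) * (x - y) ^ 6 := by
      linear_combination (((15 : ℝ)/16)*a₄^2 + (6 : ℝ)*y*a₃*a₄ + (9 : ℝ)*y^2*a₃^2 + ((27 : ℝ)/4)*y^2*a₂*a₄ + (18 : ℝ)*y^3*a₂*a₃ + ((11 : ℝ)/4)*y^3*a₁*a₄ + ((27 : ℝ)/4)*y^4*a₂^2 + (5 : ℝ)*y^4*a₁*a₃ + ((7 : ℝ)/16)*y^4*a₀*a₄ + (-2 : ℝ)*y^6*a₁^2 + ((-3 : ℝ)/2)*y^6*a₀*a₂ + ((-3 : ℝ)/2)*y^7*a₀*a₁ + ((-3 : ℝ)/16)*y^8*a₀^2 + ((3 : ℝ)/2)*x*a₃*a₄ + (6 : ℝ)*x*y*a₃^2 + ((9 : ℝ)/2)*x*y*a₂*a₄ + (27 : ℝ)*x*y^2*a₂*a₃ + ((21 : ℝ)/4)*x*y^2*a₁*a₄ + (27 : ℝ)*x*y^3*a₂^2 + (27 : ℝ)*x*y^3*a₁*a₃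 + (1 : ℝ)*x*y^3*a₀*a₄ + (42 : ℝ)*x*y^4*a₁*a₂ + ((27 : ℝ)/4)*x*y^4*a₀*a₃ + (12 : ℝ)*x*y^5*a₁^2 + (9 : ℝ)*x*y^5*a₀*a₂ + ((7 : ℝ)/2)*x*y^6*a₀*a₁ + ((-3 : ℝ)/4)*x^2*y*a₁*a₄ + (-3 : ℝ)*x^2*y^2*a₁*a₃ + ((9 : ℝ)/8)*x^2*y^2*a₀*a₄ + ((21 : ℝ)/2)*x^2*y^3*a₁*a₂ + (2 : ℝ)*x^2*y^3*a₀*a₃ + (12 : ℝ)*x^2*y^4*a₁^2 + ((69 : ℝ)/8)*x^2*y^4*a₀*a₂ + ((21 : ℝ)/2)*x^2*y^5*a₀*a₁ + ((7 : ℝ)/4)*x^2*y^6*a₀^2 + ((1 : ℝ)/4)*x^3*a₁*a₄ + (1 : ℝ)*x^3*y*a₁*a₃ + (-1 : ℝ)*x^3*y*a₀*a₄ + ((-27 : ℝ)/2)*x^3*y^2*a₁*a₂ + ((-3 : ℝ)/2)*x^3*y^2*a₀*a₃ + (-9 : ℝ)*x^3*y^3*a₁^2 + (-6 : ℝ)*x^3*y^3*a₀*a₂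 + ((-15 : ℝ)/4)*x^3*y^4*a₀*a₁ + ((5 : ℝ)/16)*x^4*a₀*a₄ + ((15 : ℝ)/2)*x^4*y*a₁*a₂ + ((-15 : ℝ)/4)*x^4*y^3*a₀*a₁ + ((-15 : ℝ)/16)*x^4*y^4*a₀^2 + ((-3 : ℝ)/2)*x^5*a₁*a₂ + ((1 : ℝ)/4)*x^5*a₀*a₃ + (3 : ℝ)*x^5*y*a₁^2 + ((3 : ℝ)/2)*x^5*y*a₀*a₂ + ((9 : ℝ)/4)*x^5*y^2*a₀*a₁ + (-1 : ℝ)*x^6*a₁^2 + ((-3 : ℝ)/8)*x^6*a₀*a₂ + ((3 : ℝ)/4)*x^6*y*a₀*a₁ + ((3 : ℝ)/8)*x^6*y^2*a₀^2 + ((-1 : ℝ)/2)*x^7*a₀*a₁ + ((-1 : ℝ)/16)*x^8*a₀^2 + ((-15 : ℝ)/16)*v^2*a₄ + ((9 : ℝ)/2)*v^2*y^2*a₂ + ((9 : ℝ)/2)*v^2*y^3*a₁ + ((9 : ℝ)/8)*v^2*y^4*a₀ + ((-15 : ℝ)/4)*v^2*x*a₃ + (-9 : ℝ)*v^2*x*y*a₂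 + ((-9 : ℝ)/2)*v^2*x*y^2*a₁ + ((-9 : ℝ)/8)*v^2*x^2*a₂ + ((-9 : ℝ)/2)*v^2*x^2*y*a₁ + ((-9 : ℝ)/4)*v^2*x^2*y^2*a₀ + ((3 : ℝ)/4)*v^2*x^3*a₁ + ((3 : ℝ)/16)*v^2*x^4*a₀ + ((-15 : ℝ)/16)*v^4 + ((-3 : ℝ)/8)*u*v*a₄ + (3 : ℝ)*u*v*y^2*a₂ + (3 : ℝ)*u*v*y^3*a₁ + ((3 : ℝ)/4)*u*v*y^4*a₀ + ((-3 : ℝ)/2)*u*v*x*a₃ + (-6 : ℝ)*u*v*x*y*a₂ + (-3 : ℝ)*u*v*x*y^2*a₁ + ((3 : ℝ)/4)*u*v*x^2*a₂ + (-3 : ℝ)*u*v*x^2*y*a₁ + ((-3 : ℝ)/2)*u*v*x^2*y^2*a₀ + ((3 : ℝ)/2)*u*v*x^3*a₁ + ((3 : ℝ)/8)*u*v*x^4*a₀ + ((-5 : ℝ)/4)*u*v^3 + ((-1 : ℝ)/16)*u^2*a₄ + ((3 : ℝ)/4)*u^2*y^2*a₂ + ((3 : ℝ)/4)*u^2*y^3*a₁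 + ((3 : ℝ)/16)*u^2*y^4*a₀ + ((-1 : ℝ)/4)*u^2*x*a₃ + ((-3 : ℝ)/2)*u^2*x*y*a₂ + ((-3 : ℝ)/4)*u^2*x*y^2*a₁ + ((3 : ℝ)/8)*u^2*x^2*a₂ + ((-3 : ℝ)/4)*u^2*x^2*y*a₁ + ((-3 : ℝ)/8)*u^2*x^2*y^2*a₀ + ((1 : ℝ)/2)*u^2*x^3*a₁ + ((1 : ℝ)/8)*u^2*x^4*a₀ + ((-15 : ℝ)/16)*u^2*v^2 + ((-3 : ℝ)/8)*u^3*v + ((-1 : ℝ)/16)*u^4) * hu + (((-15 : ℝ)/16)*a₄^2 + ((-9 : ℝ)/4)*y*a₃*a₄ + ((-9 : ℝ)/8)*y^2*a₂*a₄ + (1 : ℝ)*y^3*a₁*a₄ + ((1 : ℝ)/2)*y^4*a₀*a₄ + ((-3 : ℝ)/2)*y^5*a₁*a₂ + ((1 : ℝ)/4)*y^5*a₀*a₃ + (-1 : ℝ)*y^6*a₁^2 + ((-3 : ℝ)/8)*y^6*a₀*a₂ + ((-1 : ℝ)/2)*y^7*a₀*a₁ + ((-1 : ℝ)/16)*y^8*a₀^2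 + ((-21 : ℝ)/4)*x*a₃*a₄ + (-9 : ℝ)*x*y*a₃^2 + ((-9 : ℝ)/2)*x*y*a₂*a₄ + ((-9 : ℝ)/2)*x*y^2*a₂*a₃ + ((-21 : ℝ)/4)*x*y^2*a₁*a₄ + (4 : ℝ)*x*y^3*a₁*a₃ + (-1 : ℝ)*x*y^3*a₀*a₄ + ((15 : ℝ)/2)*x*y^4*a₁*a₂ + ((3 : ℝ)/4)*x*y^4*a₀*a₃ + (3 : ℝ)*x*y^5*a₁^2 + ((3 : ℝ)/2)*x*y^5*a₀*a₂ + ((3 : ℝ)/4)*x*y^6*a₀*a₁ + (-6 : ℝ)*x^2*a₃^2 + ((-45 : ℝ)/8)*x^2*a₂*a₄ + ((-63 : ℝ)/2)*x^2*y*a₂*a₃ + ((3 : ℝ)/4)*x^2*y*a₁*a₄ + ((-27 : ℝ)/4)*x^2*y^2*a₂^2 + (-21 : ℝ)*x^2*y^2*a₁*a₃ + ((-9 : ℝ)/8)*x^2*y^2*a₀*a₄ + (-9 : ℝ)*x^2*y^3*a₁*a₂ + ((-3 : ℝ)/2)*x^2*y^3*a₀*a₃ + ((9 : ℝ)/8)*x^2*y^4*a₀*a₂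 + ((9 : ℝ)/4)*x^2*y^5*a₀*a₁ + ((3 : ℝ)/8)*x^2*y^6*a₀^2 + (-9 : ℝ)*x^3*a₂*a₃ + (-4 : ℝ)*x^3*a₁*a₄ + (-27 : ℝ)*x^3*y*a₂^2 + (-6 : ℝ)*x^3*y*a₁*a₃ + (1 : ℝ)*x^3*y*a₀*a₄ + (-21 : ℝ)*x^3*y^2*a₁*a₂ + (-7 : ℝ)*x^3*y^2*a₀*a₃ + (-6 : ℝ)*x^3*y^3*a₁^2 + (-6 : ℝ)*x^3*y^3*a₀*a₂ + (-3 : ℝ)*x^3*y^4*a₀*a₁ + (-7 : ℝ)*x^4*a₁*a₃ + ((-5 : ℝ)/4)*x^4*a₀*a₄ + (-21 : ℝ)*x^4*y*a₁*a₂ + (3 : ℝ)*x^4*y*a₀*a₃ + (-6 : ℝ)*x^4*y^2*a₁^2 + (-6 : ℝ)*x^4*y^2*a₀*a₂ + (-3 : ℝ)*x^4*y^3*a₀*a₁ + ((-3 : ℝ)/4)*x^4*y^4*a₀^2 + (-3 : ℝ)*x^5*a₀*a₃ + (-6 : ℝ)*x^5*y*a₁^2 + (-3 : ℝ)*x^5*y^2*a₀*a₁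 + (1 : ℝ)*x^6*a₁^2 + ((-3 : ℝ)/2)*x^6*a₀*a₂ + (-1 : ℝ)*x^6*y*a₀*a₁ + ((-1 : ℝ)/2)*x^6*y^2*a₀^2 + (-1 : ℝ)*v^2*a₄ + ((-1 : ℝ)/4)*v^2*y*a₃ + ((3 : ℝ)/8)*v^2*y^2*a₂ + ((1 : ℝ)/2)*v^2*y^3*a₁ + ((1 : ℝ)/8)*v^2*y^4*a₀ + ((-15 : ℝ)/4)*v^2*x*a₃ + ((-3 : ℝ)/2)*v^2*x*y*a₂ + ((-3 : ℝ)/4)*v^2*x*y^2*a₁ + ((-39 : ℝ)/8)*v^2*x^2*a₂ + ((-3 : ℝ)/4)*v^2*x^2*y*a₁ + ((-3 : ℝ)/8)*v^2*x^2*y^2*a₀ + (-3 : ℝ)*v^2*x^3*a₁ + ((-3 : ℝ)/4)*v^2*x^4*a₀ + ((-1 : ℝ)/16)*v^4 + ((-13 : ℝ)/8)*u*v*a₄ + ((-3 : ℝ)/2)*u*v*y*a₃ + ((3 : ℝ)/4)*u*v*y^2*a₂ + ((3 : ℝ)/2)*u*v*y^3*a₁ + ((3 : ℝ)/8)*u*v*y^4*a₀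 + (-5 : ℝ)*u*v*x*a₃ + (-6 : ℝ)*u*v*x*y*a₂ + (-3 : ℝ)*u*v*x*y^2*a₁ + ((-9 : ℝ)/2)*u*v*x^2*a₂ + (-3 : ℝ)*u*v*x^2*y*a₁ + ((-3 : ℝ)/2)*u*v*x^2*y^2*a₀ + (-2 : ℝ)*u*v*x^3*a₁ + ((-1 : ℝ)/2)*u*v*x^4*a₀ + ((-3 : ℝ)/8)*u*v^3) * hv
    calc A ^ 2 * (x - y) ^ 6 = (A * (x - y) ^ 3) ^ 2 := by ring
      _ = ((1 : ℝ)*v*a₄ + (1 : ℝ)*v*y*a₃ + (3 : ℝ)*v*x*a₃ + (3 : ℝ)*v*x*y*a₂ + (3 : ℝ)*v*x^2*a₂ + (3 : ℝ)*v*x^2*y*a₁ + (1 : ℝ)*v*x^3*a₁ + (1 : ℝ)*v*x^3*y*a₀ + (1 : ℝ)*u*a₄ + (3 : ℝ)*u*y*a₃ + (3 : ℝ)*u*y^2*a₂ + (1 : ℝ)*u*y^3*a₁ + (1 : ℝ)*u*x*a₃ + (3 : ℝ)*u*x*y*a₂ + (3 : ℝ)*u*x*y^2*a₁ + (1 : ℝ)*u*x*y^3*a₀)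 ^ 2 := by rw [e1]
      _ = 4 * ((-1 : ℝ)*y^2*a₂ + (-1 : ℝ)*y^3*a₁ + ((-1 : ℝ)/4)*y^4*a₀ + (2 : ℝ)*x*y*a₂ + (1 : ℝ)*x*y^2*a₁ + (-1 : ℝ)*x^2*a₂ + (1 : ℝ)*x^2*y*a₁ + ((1 : ℝ)/2)*x^2*y^2*a₀ + (-1 : ℝ)*x^3*a₁ + ((-1 : ℝ)/4)*x^4*a₀ + ((1 : ℝ)/4)*v^2 + ((1 : ℝ)/2)*u*v + ((1 : ℝ)/4)*u^2) ^ 3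
          - (a₀ * a₄ - 4 * a₁ * a₃ + 3 * a₂ ^ 2) * ((-1 : ℝ)*y^2*a₂ + (-1 : ℝ)*y^3*a₁ + ((-1 : ℝ)/4)*y^4*a₀ + (2 : ℝ)*x*y*a₂ + (1 : ℝ)*x*y^2*a₁ + (-1 : ℝ)*x^2*a₂ + (1 : ℝ)*x^2*y*a₁ + ((1 : ℝ)/2)*x^2*y^2*a₀ + (-1 : ℝ)*x^3*a₁ + ((-1 : ℝ)/4)*x^4*a₀ + ((1 : ℝ)/4)*v^2 + ((1 : ℝ)/2)*u*v + ((1 : ℝ)/4)*u^2) * (x - y) ^ 4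
          - (a₀ * a₂ * a₄ + 2 * a₁ * a₂ * a₃ - a₂ ^ 3 - a₀ * a₃ ^ 2 - a₁ ^ 2 * a₄) * (x - y) ^ 6 := key
      _ = 4 * (w * (x - y) ^ 2) ^ 3 - g₂ * (w * (x - y) ^ 2) * (x - y) ^ 4 - g₃ * (x - y) ^ 6 := by
          rw [e2, hg₂, hg₃]
      _ = (4 * w ^ 3 - g₂ * w - g₃) * (x - y) ^ 6 := by ring
  exact mul_right_cancel₀ (pow_ne_zero 6 hs) main
end

section
/- Let f(X) = a₀X⁴ + 4a₁X³ + 6a₂X² + 4a₃X + a₄ be a real quartic polynomial. Let x, y be real numbers with x ≠ y, f(x) ≥ 0 and f(y) ≥ 0. Then (1/4)·((√(f(x)) + √(f(y)))/(x−y))² − (1/4)a₀(x+y)² − a₁(x+y) − a₂ = (F₁(x,y) + √(f(x)·f(y)))/(2(x−y)²), where F₁(x,y) = f(y) + (1/2)f'(y)(x−y) + (1/12)f''(y)(x−y)². -/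
/-- Equality of the two expressions (wformula1) and (walternative) for the auxiliary
quantity `w` in the proof of the Biermann–Weierstrass theorem. -/
theorem w_two_expressions_equal
    (a₀ a₁ a₂ a₃ a₄ : ℝ)
    (f f' f'' : ℝ → ℝ)
    (hf : f = fun X => a₀ * X ^ 4 + 4 * a₁ * X ^ 3 + 6 * a₂ * X ^ 2 + 4 * a₃ * X + a₄)
    (hf' : f' = fun X => 4 * a₀ * X ^ 3 + 12 * a₁ * X ^ 2 + 12 * a₂ * X + 4 * a₃)
    (hf'' : f'' = fun X => 12 * a₀ * X ^ 2 + 24 * a₁ * X + 12 * a₂)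
    (x y : ℝ) (hxy : x ≠ y) (hfx : 0 ≤ f x) (hfy : 0 ≤ f y)
    (F₁ : ℝ)
    (hF₁ : F₁ = f y + (1 / 2) * f' y * (x - y) + (1 / 12) * f'' y * (x - y) ^ 2) :
    (1 / 4) * ((Real.sqrt (f x) + Real.sqrt (f y)) / (x - y)) ^ 2
        - (1 / 4) * a₀ * (x + y) ^ 2 - a₁ * (x + y) - a₂
      = (F₁ + Real.sqrt (f x * f y)) / (2 * (x - y) ^ 2) := by
  have hd : x - y ≠ 0 := sub_ne_zero.mpr hxy
  have hmul : Real.sqrt (f x * f y) = Real.sqrt (f x) * Real.sqrt (f y) :=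
    Real.sqrt_mul hfx _
  have hx2 : Real.sqrt (f x) ^ 2 = f x := Real.sq_sqrt hfx
  have hy2 : Real.sqrt (f y) ^ 2 = f y := Real.sq_sqrt hfy
  have hexp : (Real.sqrt (f x) + Real.sqrt (f y)) ^ 2
      = f x + f y + 2 * Real.sqrt (f x * f y) := by
    rw [add_sq, hx2, hy2, hmul]; ring
  rw [div_pow, hexp]
  have hpoly : f x + f y = 2 * F₁
      + (x - y) ^ 2 * (a₀ * (x + y) ^ 2 + 4 * a₁ * (x + y) + 4 * a₂) := by
    subst hf hf' hf''
    simp only [hF₁]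
    ring
  field_simp
  rw [hpoly]
  ring
end

section
/- Let f(X) = a₀X⁴ + 4a₁X³ + 6a₂X² + 4a₃X + a₄ be a real quartic polynomial and let y be a fixed real number with f(y) ≥ 0. Define, for x ≠ y with f(x) > 0, w(x) = (F₁(x,y) + √(f(x)·f(y)))/(2(x−y)²) where F₁(x,y) = f(y) + (1/2)f'(y)(x−y) + (1/12)f''(y)(x−y)², and A(x,y) = (f(x)/(x−y)³ − f'(x)/(4(x−y)²))·√(f(y)) + (f(y)/(x−y)³ + f'(y)/(4(x−y)²))·√(f(x)). Then at every point x ≠ y with f(x) > 0, the function w is differentiable and w'(x) = −A(x,y)/√(f(x)). -/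
/-!
Write `u = x - y` and split `w` into `F₁(x, y) / (2u²)` and `√(f x · f y) / (2u²)`.
The first part is `f y / (2u²) + f' y / (4u) + f'' y / 24`, so `f'' y` drops out and its
derivative `-(f y / u³ + f' y / (4u²))` is the second summand of `-A / √(f x)`. Since
`√(f z · f y) = √(f z) · √(f y)` for `z` near `x`, the quotient rule turns the second part
into the first summand.
-/

open Real Topology

theorem hasDerivAt_quartic_s3 (a₀ a₁ a₂ a₃ a₄ x : ℝ) :
    HasDerivAt (fun X => a₀ * X ^ 4 + 4 * a₁ * X ^ 3 + 6 * a₂ * X ^ 2 + 4 * a₃ * X + a₄)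
      (4 * a₀ * x ^ 3 + 12 * a₁ * x ^ 2 + 12 * a₂ * x + 4 * a₃) x := by
  refine ((((((hasDerivAt_pow 4 x).const_mul a₀).add
    ((hasDerivAt_pow 3 x).const_mul (4 * a₁))).add
    ((hasDerivAt_pow 2 x).const_mul (6 * a₂))).add
    ((hasDerivAt_id x).const_mul (4 * a₃))).add_const a₄).congr_deriv ?_
  push_cast
  ring

theorem hasDerivAt_div_two_mul_sub_sq {g : ℝ → ℝ} {g' x y : ℝ} (hg : HasDerivAt g g' x)
    (hxy : x ≠ y) :
    HasDerivAt (fun z => g z / (2 * (z - y) ^ 2))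
      (g' / (2 * (x - y) ^ 2) - g x / (x - y) ^ 3) x := by
  have hu : x - y ≠ 0 := sub_ne_zero.mpr hxy
  refine (hg.div ((((hasDerivAt_id x).sub_const y).pow 2).const_mul 2)
    (by simpa using hu)).congr_deriv ?_
  simp only [id, Pi.pow_apply]
  field_simp
  ring

theorem hasDerivAt_quadratic_div_two_mul_sub_sq (c₀ c₁ c₂ : ℝ) {x y : ℝ} (hxy : x ≠ y) :
    HasDerivAt
      (fun z => (c₀ + 1 / 2 * c₁ * (z - y) + 1 / 12 * c₂ * (z - y) ^ 2) / (2 * (z - y) ^ 2))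
      (-(c₀ / (x - y) ^ 3 + c₁ / (4 * (x - y) ^ 2))) x := by
  have hu : x - y ≠ 0 := sub_ne_zero.mpr hxy
  have hP : HasDerivAt (fun z => c₀ + 1 / 2 * c₁ * (z - y) + 1 / 12 * c₂ * (z - y) ^ 2)
      (1 / 2 * c₁ + 1 / 6 * c₂ * (x - y)) x := by
    refine (((((hasDerivAt_id x).sub_const y).const_mul (1 / 2 * c₁)).const_add c₀).add
      ((((hasDerivAt_id x).sub_const y).pow 2).const_mul (1 / 12 * c₂))).congr_deriv ?_
    simp only [id]
    ring
  refine (hasDerivAt_div_two_mul_sub_sq hP hxy).congr_deriv ?_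
  field_simp
  ring

theorem hasDerivAt_sqrt_mul_const {g : ℝ → ℝ} {g' x : ℝ} (hg : HasDerivAt g g' x)
    (hgx : 0 < g x) (c : ℝ) :
    HasDerivAt (fun z => √(g z * c)) (√c * g' / (2 * √(g x))) x := by
  have hsplit : (fun z => √(g z) * √c) =ᶠ[𝓝 x] fun z => √(g z * c) := by
    filter_upwards [hg.continuousAt.eventually (lt_mem_nhds hgx)] with z hz
    exact (sqrt_mul hz.le c).symm
  refine (((hg.sqrt hgx.ne').mul_const √c).congr_of_eventuallyEq hsplit.symm).congr_deriv ?_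
  ring

theorem w_hasDerivAt_general
    (a₀ a₁ a₂ a₃ a₄ : ℝ)
    (f f' f'' : ℝ → ℝ)
    (hf : f = fun X => a₀ * X ^ 4 + 4 * a₁ * X ^ 3 + 6 * a₂ * X ^ 2 + 4 * a₃ * X + a₄)
    (hf' : f' = fun X => 4 * a₀ * X ^ 3 + 12 * a₁ * X ^ 2 + 12 * a₂ * X + 4 * a₃)
    (y : ℝ)
    (w : ℝ → ℝ)
    (hw : w = fun x =>
      (f y + (1 / 2) * f' y * (x - y) + (1 / 12) * f'' y * (x - y) ^ 2
          + Real.sqrt (f x * f y)) / (2 * (x - y) ^ 2))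
    (A : ℝ → ℝ)
    (hA : A = fun x =>
      (f x / (x - y) ^ 3 - f' x / (4 * (x - y) ^ 2)) * Real.sqrt (f y)
        + (f y / (x - y) ^ 3 + f' y / (4 * (x - y) ^ 2)) * Real.sqrt (f x)) :
    ∀ x : ℝ, x ≠ y → 0 < f x → HasDerivAt w (-A x / Real.sqrt (f x)) x := by
  intro x hxy hfx
  have hf_deriv : HasDerivAt f (f' x) x := by
    rw [hf, hf']
    exact hasDerivAt_quartic_s3 a₀ a₁ a₂ a₃ a₄ x
  have hw_split : w = fun z =>
      (f y + 1 / 2 * f' y * (z - y) + 1 / 12 * f'' y * (z - y) ^ 2) / (2 * (z - y) ^ 2)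
        + √(f z * f y) / (2 * (z - y) ^ 2) := by
    simp only [hw, add_div]
  rw [hw_split]
  refine ((hasDerivAt_quadratic_div_two_mul_sub_sq (f y) (f' y) (f'' y) hxy).add
    (hasDerivAt_div_two_mul_sub_sq (hasDerivAt_sqrt_mul_const hf_deriv hfx (f y)) hxy)
    ).congr_deriv ?_
  have hs : √(f x) ≠ 0 := (sqrt_pos.mpr hfx).ne'
  rw [hA, sqrt_mul hfx.le]
  field_simp
  rw [sq_sqrt hfx.le]
  ring

/-- The substitution function `w(x)` of the Biermann–Weierstrass proof satisfies
`w'(x) = −A(x,y)/√(f(x))` at every point `x ≠ y` with `f(x) > 0`. -/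
theorem w_hasDerivAt
    (a₀ a₁ a₂ a₃ a₄ : ℝ)
    (f f' f'' : ℝ → ℝ)
    (hf : f = fun X => a₀ * X ^ 4 + 4 * a₁ * X ^ 3 + 6 * a₂ * X ^ 2 + 4 * a₃ * X + a₄)
    (hf' : f' = fun X => 4 * a₀ * X ^ 3 + 12 * a₁ * X ^ 2 + 12 * a₂ * X + 4 * a₃)
    (hf'' : f'' = fun X => 12 * a₀ * X ^ 2 + 24 * a₁ * X + 12 * a₂)
    (y : ℝ) (hfy : 0 ≤ f y)
    (w : ℝ → ℝ)
    (hw : w = fun x =>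
      (f y + (1 / 2) * f' y * (x - y) + (1 / 12) * f'' y * (x - y) ^ 2
          + Real.sqrt (f x * f y)) / (2 * (x - y) ^ 2))
    (A : ℝ → ℝ)
    (hA : A = fun x =>
      (f x / (x - y) ^ 3 - f' x / (4 * (x - y) ^ 2)) * Real.sqrt (f y)
        + (f y / (x - y) ^ 3 + f' y / (4 * (x - y) ^ 2)) * Real.sqrt (f x)) :
    ∀ x : ℝ, x ≠ y → 0 < f x → HasDerivAt w (-A x / Real.sqrt (f x)) x :=
  w_hasDerivAt_general a₀ a₁ a₂ a₃ a₄ f f' f'' hf hf' y w hw A hA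
end

section
/- Let f(X) = a₀X⁴ + 4a₁X³ + 6a₂X² + 4a₃X + a₄ be a real quartic polynomial. Let x, y be real numbers with x ≠ y, f(x) ≥ 0 and f(y) ≥ 0. Define w = (F₁(x,y) + √(f(x)·f(y)))/(2(x−y)²) where F₁(x,y) = f(y) + (1/2)f'(y)(x−y) + (1/12)f''(y)(x−y)², and A = (f(x)/(x−y)³ − f'(x)/(4(x−y)²))·√(f(y)) + (f(y)/(x−y)³ + f'(y)/(4(x−y)²))·√(f(x)). If the denominator D = 2·(w − f''(y)/24)² − (1/48)·f(y)·f⁽⁴⁾(y) is nonzero, then x − y = (√(f(y))·A + (1/2)f'(y)·(w − f''(y)/24) + (1/24)f(y)f'''(y)) / D. -/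
/-!
Put `h = x − y`, `u = √f(x)`, `v = √f(y)` and expand `f` and `f'` at `y`. The definition of `w`
becomes `2h²(w − f''(y)/24) = f(y) + f'(y)h/2 + uv`, and `4h³ · vA` is linear in `uv`. After
eliminating `w` and `A`, `4h³` times the difference of the two sides of the claim is
`2((uv)² − f(x)f(y))`, so the identity holds for any square roots `u`, `v` of `f(x)`, `f(y)`.
-/

theorem eq_div_of_taylor_quartic {K : Type*} [Field K] [CharZero K]
    {p₀ p₁ p₂ p₃ p₄ h fx fx' u v w A D : K} (hh : h ≠ 0)
    (hfx : fx = p₀ + p₁ * h + p₂ / 2 * h ^ 2 + p₃ / 6 * h ^ 3 + p₄ / 24 * h ^ 4)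
    (hfx' : fx' = p₁ + p₂ * h + p₃ / 2 * h ^ 2 + p₄ / 6 * h ^ 3)
    (hu : u ^ 2 = fx) (hv : v ^ 2 = p₀)
    (hw : w = (p₀ + 1 / 2 * p₁ * h + 1 / 12 * p₂ * h ^ 2 + u * v) / (2 * h ^ 2))
    (hA : A = (fx / h ^ 3 - fx' / (4 * h ^ 2)) * v + (p₀ / h ^ 3 + p₁ / (4 * h ^ 2)) * u)
    (hD : D = 2 * (w - p₂ / 24) ^ 2 - 1 / 48 * p₀ * p₄) (hD0 : D ≠ 0) :
    h = (v * A + 1 / 2 * p₁ * (w - p₂ / 24) + 1 / 24 * p₀ * p₃) / D := by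
  have hW : 2 * h ^ 2 * (w - p₂ / 24) = p₀ + p₁ / 2 * h + u * v := by
    rw [hw]; field_simp; ring
  have hvA :
      4 * h ^ 3 * (v * A) = (4 * fx - h * fx') * v ^ 2 + (4 * p₀ + p₁ * h) * (u * v) := by
    rw [hA]; field_simp
  rw [eq_div_iff hD0]
  have h4 : (4 * h ^ 3 : K) ≠ 0 := mul_ne_zero (by norm_num) (pow_ne_zero 3 hh)
  refine mul_left_cancel₀ h4 ?_
  subst hD
  linear_combination (2 * (2 * h ^ 2 * (w - p₂ / 24) + (p₀ + p₁ / 2 * h + u * v)) - p₁ * h) * hW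
    - hvA + 2 * v ^ 2 * hu + (h * fx' - 2 * fx) * hv - 2 * p₀ * hfx + p₀ * h * hfx'

/-- The algebraic inversion step of the Biermann–Weierstrass theorem: solving the
quadratic relation between `w` and `x − y` for `x`. -/
theorem biermann_weierstrass_inversion
    (a₀ a₁ a₂ a₃ a₄ : ℝ)
    (f f' f'' f''' f'''' : ℝ → ℝ)
    (hf : f = fun X => a₀ * X ^ 4 + 4 * a₁ * X ^ 3 + 6 * a₂ * X ^ 2 + 4 * a₃ * X + a₄)
    (hf' : f' = fun X => 4 * a₀ * X ^ 3 + 12 * a₁ * X ^ 2 + 12 * a₂ * X + 4 * a₃)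
    (hf'' : f'' = fun X => 12 * a₀ * X ^ 2 + 24 * a₁ * X + 12 * a₂)
    (hf''' : f''' = fun X => 24 * a₀ * X + 24 * a₁)
    (hf'''' : f'''' = fun _ => 24 * a₀)
    (x y : ℝ) (hxy : x ≠ y) (hfx : 0 ≤ f x) (hfy : 0 ≤ f y)
    (F₁ w A D : ℝ)
    (hF₁ : F₁ = f y + (1 / 2) * f' y * (x - y) + (1 / 12) * f'' y * (x - y) ^ 2)
    (hw : w = (F₁ + Real.sqrt (f x * f y)) / (2 * (x - y) ^ 2))
    (hA : A = (f x / (x - y) ^ 3 - f' x / (4 * (x - y) ^ 2)) * Real.sqrt (f y)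
        + (f y / (x - y) ^ 3 + f' y / (4 * (x - y) ^ 2)) * Real.sqrt (f x))
    (hD : D = 2 * (w - f'' y / 24) ^ 2 - (1 / 48) * f y * f'''' y)
    (hDne : D ≠ 0) :
    x - y = (Real.sqrt (f y) * A + (1 / 2) * f' y * (w - f'' y / 24)
        + (1 / 24) * f y * f''' y) / D := by
  have taylor : f x = f y + f' y * (x - y) + f'' y / 2 * (x - y) ^ 2
      + f''' y / 6 * (x - y) ^ 3 + f'''' y / 24 * (x - y) ^ 4 := by
    simp only [hf, hf', hf'', hf''', hf'''']; ring
  have taylor' : f' x = f' y + f'' y * (x - y) + f''' y / 2 * (x - y) ^ 2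
      + f'''' y / 6 * (x - y) ^ 3 := by
    simp only [hf', hf'', hf''', hf'''']; ring
  exact eq_div_of_taylor_quartic (sub_ne_zero.mpr hxy) taylor taylor' (Real.sq_sqrt hfx)
    (Real.sq_sqrt hfy) (by rw [hw, hF₁, Real.sqrt_mul hfx]) hA hD hDne
end

section
/- Let λ ≥ 0 with λ² ≤ 12, and define the timelike effective potential U_λ(ξ) = (1 − 2/ξ)·(1 + λ²/ξ²) for ξ > 0. Then U_λ is strictly increasing on (0, ∞), satisfies U_λ(2) = 0, and U_λ(ξ) → 1 as ξ → +∞. -/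
theorem aux1 (L b : ℝ) (hL0 : 0 ≤ L) (hL : L ≤ 12) :
    0 ≤ (16 - L) * b ^ 2 - 4 * L * b + 12 * L := by
  nlinarith [sq_nonneg ((16 - L) * b - 2 * L), mul_nonneg hL0 (sub_nonneg.2 hL), sq_nonneg b]

theorem aux2 (L a b : ℝ) (hL0 : 0 ≤ L) (hL : L ≤ 12) (ha : 0 < a) (hab : a < b) :
    L * (a * b * (a + b)) < 2 * (a * b) ^ 2 + 2 * L * (a ^ 2 + a * b + b ^ 2) := by
  have hb : 0 < b := ha.trans hab
  have hc : 0 < 2 * b ^ 2 - L * b + 2 * L := by nlinarith [sq_nonneg (b - L / 4), sq_nonneg b]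
  rcases eq_or_lt_of_le hL0 with h0 | h0
  · rw [← h0]
    nlinarith [mul_pos (mul_pos ha ha) (mul_pos hb hb)]
  rcases eq_or_lt_of_le (aux1 L b hL0 hL) with hR | hR
  · have hL12 : L = 12 := by
      nlinarith [sq_nonneg ((16 - L) * b - 2 * L), mul_nonneg hL0 (sub_nonneg.2 hL)]
    have hb6 : b = 6 := by nlinarith [sq_nonneg (b - 6)]
    subst hL12 hb6
    nlinarith [sq_nonneg (a - 6)]
  · nlinarith [sq_nonneg (2 * (2 * b ^ 2 - L * b + 2 * L) * a - L * b * (b - 2)),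
      mul_pos (mul_pos h0 (mul_pos hb hb)) hR, hc]

/-- For `0 ≤ λ` with `λ² ≤ 12`, the timelike effective potential
`U_λ(ξ) = (1 − 2/ξ)(1 + λ²/ξ²)` is strictly increasing on `(0, ∞)`, vanishes at
`ξ = 2`, and tends to `1` as `ξ → +∞`. -/
theorem timelike_potential_monotone_small_lambda
    (lam : ℝ) (hlam : 0 ≤ lam) (hlam2 : lam ^ 2 ≤ 12)
    (U : ℝ → ℝ) (hU : U = fun ξ => (1 - 2 / ξ) * (1 + lam ^ 2 / ξ ^ 2)) :
    StrictMonoOn U (Set.Ioi (0 : ℝ)) ∧ U 2 = 0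
      ∧ Filter.Tendsto U Filter.atTop (nhds 1) := by
  subst hU
  refine ⟨?_, by norm_num, ?_⟩
  · intro a ha b hb hab
    simp only [Set.mem_Ioi] at ha hb
    have key := aux2 (lam ^ 2) a b (sq_nonneg lam) hlam2 ha hab
    have ha' : a ≠ 0 := ha.ne'
    have hb' : b ≠ 0 := hb.ne'
    simp only
    rw [← sub_pos]
    have expand : (1 - 2 / b) * (1 + lam ^ 2 / b ^ 2) - (1 - 2 / a) * (1 + lam ^ 2 / a ^ 2)
        = ((b - a) * (2 * (a * b) ^ 2 + 2 * lam ^ 2 * (a ^ 2 + a * b + b ^ 2)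
            - lam ^ 2 * (a * b * (a + b)))) / (a ^ 3 * b ^ 3) := by
      field_simp
      ring
    rw [expand]
    have hden : 0 < a ^ 3 * b ^ 3 := by positivity
    exact div_pos (mul_pos (sub_pos.2 hab) (sub_pos.2 key)) hden
  · have h1 : Filter.Tendsto (fun ξ : ℝ => 2 / ξ) Filter.atTop (nhds 0) :=
      tendsto_const_nhds.div_atTop Filter.tendsto_id
    have h2 : Filter.Tendsto (fun ξ : ℝ => lam ^ 2 / ξ ^ 2) Filter.atTop (nhds 0) :=
      tendsto_const_nhds.div_atTop (Filter.tendsto_pow_atTop two_ne_zero)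
    have : Filter.Tendsto (fun ξ : ℝ => (1 - 2 / ξ) * (1 + lam ^ 2 / ξ ^ 2))
        Filter.atTop (nhds ((1 - 0) * (1 + 0))) :=
      ((tendsto_const_nhds (x := (1 : ℝ))).sub h1).mul
        ((tendsto_const_nhds (x := (1 : ℝ))).add h2)
    simpa using this
end

section
/- Let λ > 0 with λ² > 12, and define the timelike effective potential U_λ(ξ) = (1 − 2/ξ)·(1 + λ²/ξ²) for ξ > 0. Define ξ_min = (λ²/2)·(1 + √(1 − 12/λ²)) and ξ_max = (λ²/2)·(1 − √(1 − 12/λ²)). Then 3 < ξ_max < 6 < ξ_min, U_λ has a local maximum at ξ_max and a local minimum at ξ_min, and the derivative of U_λ on (0, ∞) vanishes exactly at the two points ξ_max and ξ_min. -/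
/-!
Clearing denominators, `U_λ'(ξ) = (2 / ξ⁴) (ξ² - λ² ξ + 3 λ²)`, so on `(0, ∞)` the sign of `U_λ'`
is that of a quadratic whose roots are `ξ_max < ξ_min`: `U_λ` increases, decreases, then
increases again. Writing `s = √(1 - 12/λ²) ∈ (0, 1)`, the identity `(1 - s)(1 + s) = 12/λ²`
gives `ξ_max = 6 / (1 + s) ∈ (3, 6)` and `ξ_min = 6 / (1 - s) > 6`.
-/

open Set

section SignPattern

variable {f g : ℝ → ℝ} {c a b : ℝ}

theorem differentiableOn_Ioi_of_hasDerivAt_mul_sub_mul_sub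
    (hf : ∀ x, c < x → HasDerivAt f (g x * ((x - a) * (x - b))) x) :
    DifferentiableOn ℝ f (Ioi c) :=
  fun x hx => (hf x hx).differentiableAt.differentiableWithinAt

theorem isLocalMax_of_hasDerivAt_mul_sub_mul_sub (hca : c < a) (hab : a < b)
    (hf : ∀ x, c < x → HasDerivAt f (g x * ((x - a) * (x - b))) x)
    (hg : ∀ x, c < x → 0 < g x) : IsLocalMax f a := by
  have hd := differentiableOn_Ioi_of_hasDerivAt_mul_sub_mul_sub hf
  refine isLocalMax_of_deriv_Ioo hca hab (hf a hca).continuousAt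
    (hd.mono fun x hx => hx.1) (hd.mono fun x hx => hca.trans hx.1) ?_ ?_
  · rintro x ⟨hcx, hxa⟩
    rw [(hf x hcx).deriv]
    exact mul_nonneg (hg x hcx).le (mul_nonneg_of_nonpos_of_nonpos (by linarith) (by linarith))
  · rintro x ⟨hax, hxb⟩
    rw [(hf x (hca.trans hax)).deriv]
    exact mul_nonpos_of_nonneg_of_nonpos (hg x (hca.trans hax)).le
      (mul_nonpos_of_nonneg_of_nonpos (by linarith) (by linarith))

theorem isLocalMin_of_hasDerivAt_mul_sub_mul_sub (hca : c < a) (hab : a < b)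
    (hf : ∀ x, c < x → HasDerivAt f (g x * ((x - a) * (x - b))) x)
    (hg : ∀ x, c < x → 0 < g x) : IsLocalMin f b := by
  have hd := differentiableOn_Ioi_of_hasDerivAt_mul_sub_mul_sub hf
  have hcb := hca.trans hab
  refine isLocalMin_of_deriv_Ioo hab (lt_add_one b) (hf b hcb).continuousAt
    (hd.mono fun x hx => hca.trans hx.1) (hd.mono fun x hx => hcb.trans hx.1) ?_ ?_
  · rintro x ⟨hax, hxb⟩
    rw [(hf x (hca.trans hax)).deriv]
    exact mul_nonpos_of_nonneg_of_nonpos (hg x (hca.trans hax)).le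
      (mul_nonpos_of_nonneg_of_nonpos (by linarith) (by linarith))
  · rintro x ⟨hbx, -⟩
    rw [(hf x (hcb.trans hbx)).deriv]
    exact mul_nonneg (hg x (hcb.trans hbx)).le (mul_nonneg (by linarith) (by linarith))

theorem deriv_eq_zero_iff_of_hasDerivAt_mul_sub_mul_sub
    (hf : ∀ x, c < x → HasDerivAt f (g x * ((x - a) * (x - b))) x)
    (hg : ∀ x, c < x → 0 < g x) {x : ℝ} (hx : c < x) :
    deriv f x = 0 ↔ x = a ∨ x = b := by
  rw [(hf x hx).deriv, mul_eq_zero, mul_eq_zero, sub_eq_zero, sub_eq_zero]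
  simp only [(hg x hx).ne', false_or]

end SignPattern

section TimelikePotential

variable {L : ℝ}

theorem hasDerivAt_timelike_potential {ξ : ℝ} (hξ : ξ ≠ 0) :
    HasDerivAt (fun ξ => (1 - 2 / ξ) * (1 + L / ξ ^ 2))
      (2 / ξ ^ 4 * (ξ ^ 2 - L * ξ + 3 * L)) ξ := by
  have h₁ : HasDerivAt (fun x => 1 - 2 / x) (2 / ξ ^ 2) ξ := by
    simpa [div_eq_mul_inv] using ((hasDerivAt_inv hξ).const_mul 2).const_sub 1
  have h₂ : HasDerivAt (fun x => 1 + L / x ^ 2) (-(2 * L) / ξ ^ 3) ξ := by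
    refine (((hasDerivAt_const ξ L).fun_div (hasDerivAt_pow 2 ξ)
      (pow_ne_zero 2 hξ)).const_add 1).congr_deriv ?_
    field_simp
    ring
  refine (h₁.mul h₂).congr_deriv ?_
  field_simp
  ring

theorem mul_sq_sqrt_one_sub_twelve_div (hL : 12 ≤ L) : L * √(1 - 12 / L) ^ 2 = L - 12 := by
  have hL0 : L ≠ 0 := by positivity
  rw [Real.sq_sqrt (sub_nonneg.2 ((div_le_one (by positivity)).2 hL))]
  field_simp

theorem sq_sub_mul_add_eq_mul_sub_mul_sub (hL : 12 ≤ L) (ξ : ℝ) :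
    ξ ^ 2 - L * ξ + 3 * L
      = (ξ - L / 2 * (1 - √(1 - 12 / L))) * (ξ - L / 2 * (1 + √(1 - 12 / L))) := by
  linear_combination (L / 4) * mul_sq_sqrt_one_sub_twelve_div hL

theorem timelike_critical_radii_bounds (hL : 12 < L) :
    3 < L / 2 * (1 - √(1 - 12 / L)) ∧ L / 2 * (1 - √(1 - 12 / L)) < 6
      ∧ 6 < L / 2 * (1 + √(1 - 12 / L)) := by
  have hs := mul_sq_sqrt_one_sub_twelve_div hL.le
  set s := √(1 - 12 / L)
  have hs0 : 0 < s := Real.sqrt_pos.2 (sub_pos.2 ((div_lt_one (by positivity)).2 hL))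
  have hs1 : s < 1 := by
    by_contra! h
    nlinarith [mul_le_mul h h zero_le_one hs0.le]
  have hmax : L / 2 * (1 - s) = 6 / (1 + s) := by
    field_simp
    linear_combination -hs
  have hmin : L / 2 * (1 + s) = 6 / (1 - s) := by
    rw [eq_div_iff (by linarith)]
    linear_combination -hs / 2
  rw [hmax, hmin]
  exact ⟨(lt_div_iff₀ (by linarith)).2 (by linarith), div_lt_self (by norm_num) (by linarith),
    (lt_div_iff₀ (by linarith)).2 (by linarith)⟩

end TimelikePotential

theorem timelike_potential_critical_points_general
    (lam : ℝ) (hlam2 : 12 < lam ^ 2)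
    (U : ℝ → ℝ) (hU : U = fun ξ => (1 - 2 / ξ) * (1 + lam ^ 2 / ξ ^ 2))
    (ξmin ξmax : ℝ)
    (hξmin : ξmin = lam ^ 2 / 2 * (1 + Real.sqrt (1 - 12 / lam ^ 2)))
    (hξmax : ξmax = lam ^ 2 / 2 * (1 - Real.sqrt (1 - 12 / lam ^ 2))) :
    3 < ξmax ∧ ξmax < 6 ∧ 6 < ξmin
      ∧ IsLocalMax U ξmax ∧ IsLocalMin U ξmin
      ∧ (∀ ξ ∈ Set.Ioi (0 : ℝ), deriv U ξ = 0 ↔ (ξ = ξmax ∨ ξ = ξmin)) := by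
  have hbounds := timelike_critical_radii_bounds hlam2
  rw [← hξmax, ← hξmin] at hbounds
  obtain ⟨h3, h6, h6'⟩ := hbounds
  have hU' : ∀ ξ, 0 < ξ → HasDerivAt U (2 / ξ ^ 4 * ((ξ - ξmax) * (ξ - ξmin))) ξ := by
    intro ξ hξ
    rw [hU, hξmax, hξmin, ← sq_sub_mul_add_eq_mul_sub_mul_sub hlam2.le]
    exact hasDerivAt_timelike_potential hξ.ne'
  have hpos : ∀ ξ : ℝ, 0 < ξ → 0 < 2 / ξ ^ 4 := fun ξ hξ => by positivity
  have hmax0 : 0 < ξmax := by linarith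
  have hlt : ξmax < ξmin := h6.trans h6'
  exact ⟨h3, h6, h6', isLocalMax_of_hasDerivAt_mul_sub_mul_sub hmax0 hlt hU' hpos,
    isLocalMin_of_hasDerivAt_mul_sub_mul_sub hmax0 hlt hU' hpos,
    fun ξ hξ => deriv_eq_zero_iff_of_hasDerivAt_mul_sub_mul_sub hU' hpos hξ⟩

/-- For `λ² > 12`, the timelike effective potential `U_λ` has a local maximum at
`ξ_max` and a local minimum at `ξ_min`, with `3 < ξ_max < 6 < ξ_min`, and its
derivative on `(0, ∞)` vanishes exactly at these two points. -/
theorem timelike_potential_critical_points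
    (lam : ℝ) (hlam : 0 < lam) (hlam2 : 12 < lam ^ 2)
    (U : ℝ → ℝ) (hU : U = fun ξ => (1 - 2 / ξ) * (1 + lam ^ 2 / ξ ^ 2))
    (ξmin ξmax : ℝ)
    (hξmin : ξmin = lam ^ 2 / 2 * (1 + Real.sqrt (1 - 12 / lam ^ 2)))
    (hξmax : ξmax = lam ^ 2 / 2 * (1 - Real.sqrt (1 - 12 / lam ^ 2))) :
    3 < ξmax ∧ ξmax < 6 ∧ 6 < ξmin
      ∧ IsLocalMax U ξmax ∧ IsLocalMin U ξmin
      ∧ (∀ ξ ∈ Set.Ioi (0 : ℝ), deriv U ξ = 0 ↔ (ξ = ξmax ∨ ξ = ξmin)) :=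
  timelike_potential_critical_points_general lam hlam2 U hU ξmin ξmax hξmin hξmax
end

section
/- Let ε > 2√2/3 and define λ_c by λ_c² = 12/(1 − 4/((3ε/√(9ε² − 8) + 1)²)). Then λ_c² > 12, and with ξ_max = (λ_c²/2)·(1 − √(1 − 12/λ_c²)), the timelike effective potential U_{λ_c}(ξ) = (1 − 2/ξ)·(1 + λ_c²/ξ²) satisfies U_{λ_c}(ξ_max) = ε². -/
/-!
Everything is best expressed through `u = √(1 - 12/λ²) ∈ (0, 1)`, i.e. `λ² = 12/(1 - u²)`.
Then `ξ_max = 6/(1 + u)` and the height of the potential barrier is `2(2 - u)²/(9(1 - u))`.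
The given formula for `λ_c` says exactly that `u = 2/(3ε/s + 1) = 2s/(3ε + s)` with
`s = √(9ε² - 8)`, and for this `u` the barrier height simplifies to `8ε²/(9ε² - s²) = ε²`.
-/

namespace Schwarzschild

open Real

noncomputable def effPotential (l2 ξ : ℝ) : ℝ := (1 - 2 / ξ) * (1 + l2 / ξ ^ 2)

noncomputable def xiMax (l2 : ℝ) : ℝ := l2 / 2 * (1 - √(1 - 12 / l2))

section Barrier

variable {u : ℝ}

theorem twelve_lt_twelve_div_one_sub_sq (hu0 : 0 < u) (hu1 : u < 1) :
    12 < 12 / (1 - u ^ 2) := by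
  rw [lt_div_iff₀ (by nlinarith)]
  nlinarith

theorem sqrt_one_sub_twelve_div_eq (hu0 : 0 ≤ u) (hu1 : u < 1) :
    √(1 - 12 / (12 / (1 - u ^ 2))) = u := by
  have hne : 1 - u ^ 2 ≠ 0 := by nlinarith
  have hsq : 1 - 12 / (12 / (1 - u ^ 2)) = u ^ 2 := by
    field_simp
    ring
  rw [hsq, sqrt_sq hu0]

theorem xiMax_twelve_div_one_sub_sq (hu0 : 0 ≤ u) (hu1 : u < 1) :
    xiMax (12 / (1 - u ^ 2)) = 6 / (1 + u) := by
  have hne : 1 - u ^ 2 ≠ 0 := by nlinarith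
  have hne' : 1 + u ≠ 0 := by linarith
  rw [xiMax, sqrt_one_sub_twelve_div_eq hu0 hu1]
  field_simp
  ring

theorem effPotential_xiMax_twelve_div_one_sub_sq (hu0 : 0 ≤ u) (hu1 : u < 1) :
    effPotential (12 / (1 - u ^ 2)) (xiMax (12 / (1 - u ^ 2))) =
      2 * (2 - u) ^ 2 / (9 * (1 - u)) := by
  have hne : 1 - u ^ 2 ≠ 0 := by nlinarith
  have hne' : 1 - u ≠ 0 := by linarith
  rw [xiMax_twelve_div_one_sub_sq hu0 hu1, effPotential]
  field_simp
  ring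

end Barrier

section Energy

variable {ε s : ℝ}

theorem barrier_two_mul_div_add (hs0 : 0 < s) (hs : s < 3 * ε) (hs2 : s ^ 2 = 9 * ε ^ 2 - 8) :
    2 * (2 - 2 * s / (3 * ε + s)) ^ 2 / (9 * (1 - 2 * s / (3 * ε + s))) = ε ^ 2 := by
  have hne : 3 * ε + s ≠ 0 := by linarith
  have htwo : 2 - 2 * s / (3 * ε + s) = 6 * ε / (3 * ε + s) := by field_simp; ring
  have hone : 1 - 2 * s / (3 * ε + s) = 8 / (3 * ε + s) ^ 2 := by
    field_simp
    linear_combination -hs2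
  rw [htwo, hone]
  generalize 3 * ε + s = a at hne ⊢
  field_simp
  ring

/-- The value of `√(1 - 12/λ_c²)` for the critical angular momentum at energy `ε`. -/
noncomputable def criticalSqrt (ε : ℝ) : ℝ := 2 / (3 * ε / √(9 * ε ^ 2 - 8) + 1)

theorem sqrt_nine_mul_sq_sub_eight_pos_lt (hε : 2 * √2 / 3 < ε) :
    0 < √(9 * ε ^ 2 - 8) ∧ √(9 * ε ^ 2 - 8) < 3 * ε := by
  have hε0 : 0 < ε := lt_trans (by positivity) hε
  have hpos : 0 < 9 * ε ^ 2 - 8 := by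
    nlinarith [sq_sqrt (show (0 : ℝ) ≤ 2 by norm_num), sqrt_nonneg 2]
  refine ⟨sqrt_pos.mpr hpos, ?_⟩
  rw [sqrt_lt' (by positivity)]
  linarith

theorem criticalSqrt_eq (hε : 2 * √2 / 3 < ε) :
    criticalSqrt ε = 2 * √(9 * ε ^ 2 - 8) / (3 * ε + √(9 * ε ^ 2 - 8)) := by
  have hs0 := (sqrt_nine_mul_sq_sub_eight_pos_lt hε).1
  rw [criticalSqrt, div_add_one hs0.ne', div_div_eq_mul_div]

theorem criticalSqrt_pos (hε : 2 * √2 / 3 < ε) : 0 < criticalSqrt ε := by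
  obtain ⟨hs0, hs⟩ := sqrt_nine_mul_sq_sub_eight_pos_lt hε
  rw [criticalSqrt_eq hε]
  exact div_pos (by positivity) (by linarith)

theorem criticalSqrt_lt_one (hε : 2 * √2 / 3 < ε) : criticalSqrt ε < 1 := by
  obtain ⟨hs0, hs⟩ := sqrt_nine_mul_sq_sub_eight_pos_lt hε
  rw [criticalSqrt_eq hε, div_lt_one (by linarith)]
  linarith

theorem barrier_criticalSqrt (hε : 2 * √2 / 3 < ε) :
    2 * (2 - criticalSqrt ε) ^ 2 / (9 * (1 - criticalSqrt ε)) = ε ^ 2 := by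
  obtain ⟨hs0, hs⟩ := sqrt_nine_mul_sq_sub_eight_pos_lt hε
  rw [criticalSqrt_eq hε]
  exact barrier_two_mul_div_add hs0 hs (sq_sqrt (sqrt_pos.mp hs0).le)

end Energy

end Schwarzschild

open Schwarzschild in
/-- The critical angular momentum `λ_c(ε)`: for `ε > 2√2/3`, the quantity
`λ_c² = 12/(1 − 4/((3ε/√(9ε² − 8) + 1)²))` satisfies `λ_c² > 12`, and the value of
the timelike effective potential at its local maximum `ξ_max` equals `ε²`. -/
theorem critical_angular_momentum
    (ε : ℝ) (hε : 2 * Real.sqrt 2 / 3 < ε)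
    (lc2 : ℝ)
    (hlc2 : lc2 = 12 / (1 - 4 / ((3 * ε / Real.sqrt (9 * ε ^ 2 - 8) + 1) ^ 2)))
    (ξmax : ℝ) (hξmax : ξmax = lc2 / 2 * (1 - Real.sqrt (1 - 12 / lc2))) :
    12 < lc2 ∧ (1 - 2 / ξmax) * (1 + lc2 / ξmax ^ 2) = ε ^ 2 := by
  have hu0 := criticalSqrt_pos hε
  have hu1 := criticalSqrt_lt_one hε
  have hlc2u : lc2 = 12 / (1 - criticalSqrt ε ^ 2) := by
    rw [hlc2, criticalSqrt, div_pow]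
    norm_num
  refine ⟨hlc2u ▸ twelve_lt_twelve_div_one_sub_sq hu0 hu1, ?_⟩
  have hU := effPotential_xiMax_twelve_div_one_sub_sq hu0.le hu1
  rw [← hlc2u, barrier_criticalSqrt hε] at hU
  rwa [hξmax]
end

section
/- Let ε > 2√2/3 and let λ² = 12/(1 − 4/((3ε/√(9ε² − 8) + 1)²)). Define g₂ = 1/12 − 1/λ² and g₃ = 1/216 − 1/(12λ²) − (ε² − 1)/(4λ²). Then g₂³ = 27·g₃², i.e. the discriminant Δ = g₂³ − 27g₃² of the Weierstrass cubic 4w³ − g₂w − g₃ vanishes. -/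
/-- At the critical angular momentum `λ = λ_c(ε)`, the discriminant
`Δ = g₂³ − 27g₃²` of the Weierstrass cubic vanishes, i.e. `g₂³ = 27g₃²`. -/
theorem discriminant_vanishes_at_critical_lambda
    (ε : ℝ) (hε : 2 * Real.sqrt 2 / 3 < ε)
    (lam2 : ℝ)
    (hlam2 : lam2 = 12 / (1 - 4 / ((3 * ε / Real.sqrt (9 * ε ^ 2 - 8) + 1) ^ 2)))
    (g₂ g₃ : ℝ)
    (hg₂ : g₂ = 1 / 12 - 1 / lam2)
    (hg₃ : g₃ = 1 / 216 - 1 / (12 * lam2) - (ε ^ 2 - 1) / (4 * lam2)) :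
    g₂ ^ 3 = 27 * g₃ ^ 2 := by
  have hsq2 : Real.sqrt 2 ^ 2 = 2 := Real.sq_sqrt (by norm_num)
  have hsq2n : (0:ℝ) ≤ Real.sqrt 2 := Real.sqrt_nonneg 2
  have hε0 : 0 < ε := lt_of_le_of_lt (by positivity) hε
  have h8 : (0:ℝ) < 9 * ε ^ 2 - 8 := by nlinarith [sq_nonneg (3*ε - 2*Real.sqrt 2)]
  set s := Real.sqrt (9 * ε ^ 2 - 8) with hsdef
  have hs2 : s ^ 2 = 9 * ε ^ 2 - 8 := Real.sq_sqrt h8.le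
  have hs0 : 0 < s := Real.sqrt_pos.mpr h8
  have hsum : 0 < 3 * ε + s := by linarith
  have hDs : (4 + ε * s - 3 * ε ^ 2) * (3 * ε + s) = 4 * (ε + s) := by
    linear_combination ε * hs2
  have hD : 0 < 4 + ε * s - 3 * ε ^ 2 := by nlinarith [hDs, hsum, hε0, hs0]
  have hs0' : s ≠ 0 := ne_of_gt hs0
  have hsum0 : (3 * ε + s) ≠ 0 := ne_of_gt hsum
  have hD0 : (4 + ε * s - 3 * ε ^ 2) ≠ 0 := ne_of_gt hD
  have hkey : 1 - 4 / ((3 * ε / s + 1) ^ 2)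
      = 6 * (4 + ε * s - 3 * ε ^ 2) / (3 * ε + s) ^ 2 := by
    rw [show 3 * ε / s + 1 = (3 * ε + s) / s by field_simp]
    field_simp
    linear_combination (-3 : ℝ) * hs2
  have hlam2' : lam2 = 2 * (3 * ε + s) ^ 2 / (4 + ε * s - 3 * ε ^ 2) := by
    rw [hlam2, hkey]
    field_simp
    ring
  have hlam0 : lam2 ≠ 0 := by
    rw [hlam2']; positivity
  have hg2' : g₂ = (2 * (3 * ε + s) ^ 2 - 12 * (4 + ε * s - 3 * ε ^ 2))
      / (12 * (2 * (3 * ε + s) ^ 2)) := by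
    rw [hg₂, hlam2']; field_simp
  have hg3' : g₃ = (2 * (3 * ε + s) ^ 2 - 18 * (3 * ε ^ 2 - 2) * (4 + ε * s - 3 * ε ^ 2))
      / (216 * (2 * (3 * ε + s) ^ 2)) := by
    rw [hg₃, hlam2']; field_simp; ring
  have hABP : (2 * (3 * ε + s) ^ 2 - 12 * (4 + ε * s - 3 * ε ^ 2)) ^ 3
      = (2 * (3 * ε + s) ^ 2)
        * (2 * (3 * ε + s) ^ 2 - 18 * (3 * ε ^ 2 - 2) * (4 + ε * s - 3 * ε ^ 2)) ^ 2 := by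
    linear_combination (-13824 - 1728 * s^2 - 31104 * ε * s - 432 * ε * s^3
      - 15552 * ε^2 - 3888 * ε^2 * s^2 + 66096 * ε^3 * s + 432 * ε^3 * s^3
      + 128304 * ε^4 + 11664 * ε^4 * s^2 - 34992 * ε^5 * s - 151632 * ε^6
      - 5832 * ε^6 * s^2 + 52488 * ε^8) * hs2
  rw [hg2', hg3']
  rw [div_pow, div_pow]
  rw [div_eq_iff (by positivity), mul_comm, ← mul_div_assoc, div_mul_eq_mul_div,
    eq_div_iff (by positivity)]
  linear_combination (46656 * (2 * (3 * ε + s) ^ 2) ^ 2) * hABP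
end

section
/- Let y₁, p, q be real numbers with p² < 4q, let μ = √(y₁² + p·y₁ + q) and k² = (1/2)·(1 − (y₁ + p/2)/μ), and define the incomplete Legendre elliptic integral F(φ, k) = ∫₀^φ dχ/√(1 − k²·sin²χ). Then 0 < k² < 1, and for all real a, b with y₁ ≤ a ≤ b, ∫ₐᵇ dy/√(4(y − y₁)(y² + p·y + q)) = (1/(2√μ))·(F(2·arctan √((b − y₁)/μ), k) − F(2·arctan √((a − y₁)/μ), k)). -/
/-!
The substitution `y = y₁ + μ t²`, `t = tan (χ/2)`, is a continuous increasing bijection from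
`[0, π)` onto `[y₁, ∞)`, with inverse `y ↦ 2 arctan √((y - y₁)/μ)` and `dy = μ t (1 + t²) dχ`.
Writing `c = (y₁ + p/2)/μ`, which lies in `(-1, 1)` because `(y₁ + p/2)² < y₁² + p y₁ + q = μ²`,
one has `y² + p y + q = μ² (t⁴ + 2 c t² + 1)`, and by `sin χ = 2t/(1 + t²)` also
`t⁴ + 2 c t² + 1 = (1 + t²)² (1 - k² sin² χ)` with `k² = (1 - c)/2`. Hence the transformed
integrand is the constant `1/(2√μ)` times the Legendre integrand. The change of variables is the
measure-theoretic one for injective maps, which needs no integrability: at `a = y₁` the integral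
is improper.
-/

/-- The incomplete Legendre elliptic integral of the first kind,
`F(φ, k) = ∫₀^φ dχ/√(1 − k² sin²χ)`, parametrized by `m = k²`. -/
noncomputable def legendreF (m φ : ℝ) : ℝ :=
  ∫ χ in (0 : ℝ)..φ, 1 / Real.sqrt (1 - m * Real.sin χ ^ 2)

open Real Set MeasureTheory intervalIntegral

theorem integral_eq_integral_abs_deriv_mul_comp {g g' f : ℝ → ℝ} {a b : ℝ} (hab : a ≤ b)
    (hg : ContinuousOn g (Icc a b)) (hmono : StrictMonoOn g (Icc a b))
    (hderiv : ∀ x ∈ Ioo a b, HasDerivAt g (g' x) x) :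
    ∫ y in g a..g b, f y = ∫ x in a..b, |g' x| * f (g x) := by
  have hgab : g a ≤ g b := hmono.monotoneOn ⟨le_rfl, hab⟩ ⟨hab, le_rfl⟩ hab
  rw [integral_of_le hgab, integral_of_le hab, integral_Ioc_eq_integral_Ioo,
    integral_Ioc_eq_integral_Ioo, ← hg.image_Ioo_of_strictMonoOn hab hmono,
    integral_image_eq_integral_abs_deriv_smul measurableSet_Ioo
      (fun x hx => (hderiv x hx).hasDerivWithinAt) (hmono.injOn.mono Ioo_subset_Icc_self)]
  rfl

theorem continuous_one_div_sqrt_one_sub_mul_sin_sq {m : ℝ} (hm : m < 1) :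
    Continuous fun χ => 1 / √(1 - m * sin χ ^ 2) := by
  have hpos : ∀ χ, 0 < 1 - m * sin χ ^ 2 := fun χ => by
    rcases le_or_gt m 0 with hm0 | hm0
    · nlinarith [sq_nonneg (sin χ)]
    · nlinarith [sin_sq_le_one χ]
  exact continuous_const.div (by fun_prop) fun χ => (sqrt_pos.2 (hpos χ)).ne'

theorem legendreF_sub_legendreF {m : ℝ} (hm : m < 1) (φ₁ φ₂ : ℝ) :
    legendreF m φ₂ - legendreF m φ₁ = ∫ χ in φ₁..φ₂, 1 / √(1 - m * sin χ ^ 2) :=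
  integral_interval_sub_left
    ((continuous_one_div_sqrt_one_sub_mul_sin_sq hm).intervalIntegrable _ _)
    ((continuous_one_div_sqrt_one_sub_mul_sin_sq hm).intervalIntegrable _ _)

section Quadratic

variable {p q : ℝ}

theorem quadratic_pos_of_sq_lt (hpq : p ^ 2 < 4 * q) (y : ℝ) : 0 < y ^ 2 + p * y + q := by
  nlinarith [sq_nonneg (y + p / 2)]

theorem abs_add_half_div_sqrt_quadratic_lt_one (hpq : p ^ 2 < 4 * q) (y : ℝ) :
    |(y + p / 2) / √(y ^ 2 + p * y + q)| < 1 := by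
  have hQ := quadratic_pos_of_sq_lt hpq y
  rw [abs_div, abs_of_pos (sqrt_pos.2 hQ), div_lt_one (sqrt_pos.2 hQ), ← sqrt_sq_eq_abs]
  exact sqrt_lt_sqrt (sq_nonneg _) (by linarith)

theorem quadratic_add_mul_sq {y₁ μ c : ℝ} (hμ : μ ^ 2 = y₁ ^ 2 + p * y₁ + q)
    (hc : c * μ = y₁ + p / 2) (t : ℝ) :
    (y₁ + μ * t ^ 2) ^ 2 + p * (y₁ + μ * t ^ 2) + q = μ ^ 2 * (t ^ 4 + 2 * c * t ^ 2 + 1) := by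
  linear_combination -hμ - 2 * μ * t ^ 2 * hc

end Quadratic

noncomputable def tanHalfSqSubst (y₁ μ χ : ℝ) : ℝ := y₁ + μ * tan (χ / 2) ^ 2

section TanHalfSqSubst

variable {y₁ μ : ℝ}

theorem tanHalfSqSubst_two_mul_arctan_sqrt (hμ : 0 < μ) {y : ℝ} (hy : y₁ ≤ y) :
    tanHalfSqSubst y₁ μ (2 * arctan √((y - y₁) / μ)) = y := by
  rw [tanHalfSqSubst, mul_div_cancel_left₀ _ two_ne_zero, tan_arctan,
    sq_sqrt (div_nonneg (sub_nonneg.2 hy) hμ.le)]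
  field_simp
  ring

theorem two_mul_arctan_sqrt_mem_Ico (x : ℝ) : 2 * arctan √x ∈ Ico 0 π := by
  constructor <;> linarith [arctan_nonneg.2 (sqrt_nonneg x), arctan_lt_pi_div_two √x]

theorem strictMonoOn_tanHalfSqSubst (hμ : 0 < μ) :
    StrictMonoOn (tanHalfSqSubst y₁ μ) (Ico 0 π) := by
  intro u hu v hv huv
  have h0 : 0 ≤ tan (u / 2) :=
    tan_nonneg_of_nonneg_of_le_pi_div_two (by linarith [hu.1]) (by linarith [hu.2])
  have hlt : tan (u / 2) < tan (v / 2) :=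
    tan_lt_tan_of_nonneg_of_lt_pi_div_two (by linarith [hu.1]) (by linarith [hv.2]) (by linarith)
  unfold tanHalfSqSubst
  gcongr

theorem hasDerivAt_tanHalfSqSubst {χ : ℝ} (hχ : χ ∈ Ioo (-π) π) :
    HasDerivAt (tanHalfSqSubst y₁ μ) (μ * tan (χ / 2) * (1 + tan (χ / 2) ^ 2)) χ := by
  have hcos : cos (χ / 2) ≠ 0 :=
    (cos_pos_of_mem_Ioo ⟨by linarith [hχ.1], by linarith [hχ.2]⟩).ne'
  have h := (((hasDerivAt_tan hcos).comp χ ((hasDerivAt_id χ).div_const 2)).pow 2).const_mul μ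
    |>.const_add y₁
  refine h.congr_deriv ?_
  rw [← inv_one_add_tan_sq hcos]
  simp
  ring

theorem continuousOn_tanHalfSqSubst : ContinuousOn (tanHalfSqSubst y₁ μ) (Ioo (-π) π) :=
  fun _ hχ => (hasDerivAt_tanHalfSqSubst hχ).continuousAt.continuousWithinAt

end TanHalfSqSubst

theorem one_sub_mul_sin_sq_eq (c χ : ℝ) :
    1 - 1 / 2 * (1 - c) * sin χ ^ 2 =
      (tan (χ / 2) ^ 4 + 2 * c * tan (χ / 2) ^ 2 + 1) / (1 + tan (χ / 2) ^ 2) ^ 2 := by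
  rw [sin_eq_two_mul_tan_half_div_one_add_tan_half_sq]
  field_simp
  ring

theorem abs_deriv_mul_integrand_tanHalfSqSubst {y₁ p q μ c χ : ℝ} (hpq : p ^ 2 < 4 * q)
    (hμ : 0 < μ) (hμsq : μ ^ 2 = y₁ ^ 2 + p * y₁ + q) (hc : c * μ = y₁ + p / 2)
    (hχ : χ ∈ Ioo 0 π) :
    |μ * tan (χ / 2) * (1 + tan (χ / 2) ^ 2)| *
        (1 / √(4 * (tanHalfSqSubst y₁ μ χ - y₁) *
          (tanHalfSqSubst y₁ μ χ ^ 2 + p * tanHalfSqSubst y₁ μ χ + q))) =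
      1 / (2 * √μ) * (1 / √(1 - 1 / 2 * (1 - c) * sin χ ^ 2)) := by
  rw [one_sub_mul_sin_sq_eq]
  set t := tan (χ / 2)
  have ht : 0 < t := tan_pos_of_pos_of_lt_pi_div_two (by linarith [hχ.1]) (by linarith [hχ.2])
  have hQ := quadratic_add_mul_sq hμsq hc t
  set D := t ^ 4 + 2 * c * t ^ 2 + 1
  have hD : 0 < D := by
    have h := quadratic_pos_of_sq_lt hpq (y₁ + μ * t ^ 2)
    rw [hQ] at h
    exact pos_of_mul_pos_right h (by positivity)
  have hsqrt : √(4 * (tanHalfSqSubst y₁ μ χ - y₁) *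
      (tanHalfSqSubst y₁ μ χ ^ 2 + p * tanHalfSqSubst y₁ μ χ + q)) = 2 * μ * t * √μ * √D := by
    rw [tanHalfSqSubst, hQ,
      show 4 * (y₁ + μ * t ^ 2 - y₁) * (μ ^ 2 * D) = (2 * μ * t) ^ 2 * μ * D by ring,
      sqrt_mul (by positivity), sqrt_mul (by positivity), sqrt_sq (by positivity)]
  rw [hsqrt, sqrt_div hD.le, sqrt_sq (by positivity), abs_of_pos (by positivity)]
  have := sqrt_pos.2 hμ
  have := sqrt_pos.2 hD
  field_simp

/-- Reduction of the Weierstrass-form integral `∫ dy/√(4(y−y₁)(y²+py+q))`, in the case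
of a single real root `y₁` (i.e. `p² < 4q`), to a difference of incomplete Legendre
elliptic integrals with modulus `k² = (1/2)(1 − (y₁ + p/2)/μ)`, `μ = √(y₁² + py₁ + q)`. -/
theorem weierstrass_integral_one_real_root
    (y₁ p q : ℝ) (hpq : p ^ 2 < 4 * q)
    (μ : ℝ) (hμ : μ = Real.sqrt (y₁ ^ 2 + p * y₁ + q))
    (k2 : ℝ) (hk2 : k2 = (1 / 2) * (1 - (y₁ + p / 2) / μ)) :
    (0 < k2 ∧ k2 < 1)
      ∧ ∀ a b : ℝ, y₁ ≤ a → a ≤ b →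
        (∫ y in a..b, 1 / Real.sqrt (4 * (y - y₁) * (y ^ 2 + p * y + q)))
          = (1 / (2 * Real.sqrt μ)) *
            (legendreF k2 (2 * Real.arctan (Real.sqrt ((b - y₁) / μ)))
              - legendreF k2 (2 * Real.arctan (Real.sqrt ((a - y₁) / μ)))) := by
  have hQ₁ := quadratic_pos_of_sq_lt hpq y₁
  have hμpos : 0 < μ := hμ ▸ sqrt_pos.2 hQ₁
  have hμsq : μ ^ 2 = y₁ ^ 2 + p * y₁ + q := hμ ▸ sq_sqrt hQ₁.le
  have hc := abs_add_half_div_sqrt_quadratic_lt_one hpq y₁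
  rw [← hμ] at hc
  set c := (y₁ + p / 2) / μ
  have hcμ : c * μ = y₁ + p / 2 := div_mul_cancel₀ _ hμpos.ne'
  obtain ⟨hc₁, hc₂⟩ := abs_lt.1 hc
  subst hk2
  refine ⟨⟨by linarith, by linarith⟩, fun a b ha hab => ?_⟩
  set φ : ℝ → ℝ := fun y => 2 * arctan √((y - y₁) / μ)
  have hφab : φ a ≤ φ b := by simp only [φ]; gcongr
  have hIcc : Icc (φ a) (φ b) ⊆ Ico 0 π :=
    Icc_subset_Ico (two_mul_arctan_sqrt_mem_Ico _).1 (two_mul_arctan_sqrt_mem_Ico _).2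
  have hIoo : Ioo (φ a) (φ b) ⊆ Ioo 0 π :=
    Ioo_subset_Ioo (two_mul_arctan_sqrt_mem_Ico _).1 (two_mul_arctan_sqrt_mem_Ico _).2.le
  have hπ : Ico 0 π ⊆ Ioo (-π) π := Ico_subset_Ioo_left (neg_lt_zero.2 pi_pos)
  conv_lhs => rw [← tanHalfSqSubst_two_mul_arctan_sqrt hμpos ha,
    ← tanHalfSqSubst_two_mul_arctan_sqrt hμpos (ha.trans hab)]
  rw [legendreF_sub_legendreF (by linarith), ← intervalIntegral.integral_const_mul,
    integral_eq_integral_abs_deriv_mul_comp hφab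
      (continuousOn_tanHalfSqSubst.mono (hIcc.trans hπ))
      ((strictMonoOn_tanHalfSqSubst hμpos).mono hIcc)
      fun χ hχ => hasDerivAt_tanHalfSqSubst (hπ (Ioo_subset_Ico_self (hIoo hχ)))]
  exact integral_congr_Ioo_of_le hφab fun χ hχ =>
    abs_deriv_mul_integrand_tanHalfSqSubst hpq hμpos hμsq hcμ (hIoo hχ)
end
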